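/- For every integer K ≥ 1 and every index ℓ with 2 ≤ ℓ ≤ 2K+1, the Flaschka–Newell bracket of s_ℓ with the matrix F = F_K satisfies, entrywise, {s_ℓ, F}_{FN} = (−1)^ℓ (s_ℓ/2)[F, σ3], where [X, Y] = XY − YX denotes the commutator. -/

import Mathlib

noncomputable section

open Matrix Finset

/-- Partial derivative with respect to the Stokes coordinate `s_j`
(0-based index `j`, corresponding to the paper's `s_{j+1}`) of a function
of `(s, λ) ∈ ℂ^{2K+2} × ℂ`. -/
def pS (K : ℕ) (j : Fin (2*K+2)) (f : (Fin (2*K+2) → ℂ) → ℂ → ℂ)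
    (s : Fin (2*K+2) → ℂ) (lam : ℂ) : ℂ :=
  fderiv ℂ (fun t => f t lam) s (Pi.single j 1)

/-- Partial derivative with respect to `λ`. -/
def pL (K : ℕ) (f : (Fin (2*K+2) → ℂ) → ℂ → ℂ)
    (s : Fin (2*K+2) → ℂ) (lam : ℂ) : ℂ :=
  deriv (f s) lam

/-- The structure constant `{s_{j+1}, s_{l+1}}_{FN}` (0-based indices `j < l`):
`δ_{j+1,l} − δ_{j,0} δ_{l,2K+1} λ^{−2} + (−1)^{j+l+1} s_j s_l`
(which is the paper's `δ_{j,l−1} − δ_{j,1}δ_{l,2K+2} λ^{−2} + (−1)^{j−l+1} s_j s_l`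
in 1-based indexing). -/
def cSS (K : ℕ) (j l : Fin (2*K+2)) (s : Fin (2*K+2) → ℂ) (lam : ℂ) : ℂ :=
  (if (j:ℕ)+1 = (l:ℕ) then 1 else 0)
  - (if (j:ℕ) = 0 ∧ (l:ℕ) = 2*K+1 then (lam^2)⁻¹ else 0)
  + (-1:ℂ)^((j:ℕ)+(l:ℕ)+1) * s j * s l

/-- The structure constant `{s_{j+1}, λ}_{FN} = (−1)^{j+1} s_{j+1} λ` (0-based `j`). -/
def cSL (K : ℕ) (j : Fin (2*K+2)) (s : Fin (2*K+2) → ℂ) (lam : ℂ) : ℂ :=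
  (-1:ℂ)^((j:ℕ)+1) * s j * lam

/-- The Flaschka–Newell bracket of two functions of `(s, λ)`:
`{f,g} = Σ_{j<l} {s_j,s_l}·(∂_j f ∂_l g − ∂_l f ∂_j g) + Σ_j {s_j,λ}·(∂_j f ∂_λ g − ∂_λ f ∂_j g)`. -/
def fnBr (K : ℕ) (f g : (Fin (2*K+2) → ℂ) → ℂ → ℂ)
    (s : Fin (2*K+2) → ℂ) (lam : ℂ) : ℂ :=
  (∑ j : Fin (2*K+2), ∑ l : Fin (2*K+2),
    if (j:ℕ) < (l:ℕ) then
      cSS K j l s lam *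
        (pS K j f s lam * pS K l g s lam - pS K l f s lam * pS K j g s lam)
    else 0)
  + ∑ j : Fin (2*K+2),
      cSL K j s lam * (pS K j f s lam * pL K g s lam - pL K f s lam * pS K j g s lam)

/-- Upper-triangular unipotent 2×2 matrix `[[1, a], [0, 1]]`. -/
def Umat (a : ℂ) : Matrix (Fin 2) (Fin 2) ℂ := !![1, a; 0, 1]

/-- Lower-triangular unipotent 2×2 matrix `[[1, 0], [a, 1]]`. -/
def Lmat (a : ℂ) : Matrix (Fin 2) (Fin 2) ℂ := !![1, 0; a, 1]

/-- The Pauli matrix `σ3`. -/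
def sigma3 : Matrix (Fin 2) (Fin 2) ℂ := !![1, 0; 0, -1]

/-- The matrix `σ₊`. -/
def sigmaP : Matrix (Fin 2) (Fin 2) ℂ := !![0, 1; 0, 0]

/-- The matrix `σ₋`. -/
def sigmaM : Matrix (Fin 2) (Fin 2) ℂ := !![0, 0; 1, 0]

/-- The matrix `F = F_K(s, λ) = [[1,s_1],[0,1]]·[[1,0],[s_2,1]] ⋯
[[1,s_{2K+1}],[0,1]]·[[1,0],[s_{2K+2},1]]·diag(λ, λ⁻¹)`
(here `s` is 0-based: `s i` is the paper's `s_{i+1}`). -/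
def Fmat (K : ℕ) (s : Fin (2*K+2) → ℂ) (lam : ℂ) : Matrix (Fin 2) (Fin 2) ℂ :=
  ((List.ofFn fun i : Fin (K+1) =>
      Umat (s ⟨2*(i:ℕ), by have := i.isLt; omega⟩) *
      Lmat (s ⟨2*(i:ℕ)+1, by have := i.isLt; omega⟩)).prod)
    * !![lam, 0; 0, lam⁻¹]

/-!
Write `F = M₀ M₁ ⋯ M_{N-1} D(λ)` with `M_i = 1 + s_i E_i`, where `E_i` is `σ₊` for even and `σ₋`
for odd `i` (0-based). Then `∂F/∂s_i` is `F` with `M_i` replaced by `E_i`, and the matrices `Ψ_i`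
obtained by inserting `σ3` into `F` between `M_{i-1}` and `M_i` satisfy
`Ψ_{i+1} - Ψ_i = ±2 s_i ∂F/∂s_i`, since `[M_i, σ3] = ±2 s_i E_i`. So the quadratic part of the
structure constants makes `{s_m, F}` telescope to `Ψ_N = Fσ3`, `Ψ_0 = σ3F`, `Ψ_m` and `Ψ_{m+1}`,
while the `λ`-part contributes `∂F/∂λ = λ⁻¹ Ψ_N`. What is left, `∂F/∂s_{m+1} - ∂F/∂s_{m-1}`,
is by an identity in three consecutive factors `±s_m` times `F` with `M_m` replaced by `σ3`,
that is `±s_m (Ψ_m + Ψ_{m+1}) / 2`, and everything cancels.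
-/

lemma sum_Ico_eq_half_sub {𝕜 : Type*} [Field 𝕜] [CharZero 𝕜] {u w ψ : ℕ → 𝕜} {p q : ℕ}
    (hpq : p ≤ q) (h : ∀ i ∈ Finset.Ico p q, ψ (i + 1) - ψ i = (-1) ^ (i + 1) * 2 * u i * w i) :
    ∑ i ∈ Finset.Ico p q, (-1) ^ (i + 1) * u i * w i = (ψ q - ψ p) / 2 := by
  rw [← Finset.sum_Ico_sub (f := ψ) hpq, Finset.sum_div]
  refine Finset.sum_congr rfl fun i hi => ?_
  rw [h i hi]
  ring

lemma fderiv_apply_single_of_hasDerivAt_update {𝕜 ι E : Type*} [NontriviallyNormedField 𝕜]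
    [Fintype ι] [DecidableEq ι] [NormedAddCommGroup E] [NormedSpace 𝕜 E] {g : (ι → 𝕜) → E}
    {s : ι → 𝕜} {j : ι} {g' : E} (hg : DifferentiableAt 𝕜 g s)
    (hd : HasDerivAt (fun z => g (Function.update s j z)) g' (s j)) :
    fderiv 𝕜 g s (Pi.single j 1) = g' := by
  rw [← Function.update_eq_self j s] at hg
  have := (hg.hasFDerivAt.comp_hasDerivAt (s j) (hasDerivAt_update s j (s j))).unique hd
  rwa [Function.update_eq_self] at this

def nilDir (i : ℕ) : Matrix (Fin 2) (Fin 2) ℂ := if Even i then sigmaP else sigmaM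

def unipFactor (u : ℕ → ℂ) (i : ℕ) : Matrix (Fin 2) (Fin 2) ℂ := 1 + u i • nilDir i

def unipProd (u : ℕ → ℂ) (j n : ℕ) : Matrix (Fin 2) (Fin 2) ℂ :=
  ((List.range' j (n - j)).map (unipFactor u)).prod

def insertAt (u : ℕ → ℂ) (n i : ℕ) : Matrix (Fin 2) (Fin 2) ℂ →ₗ[ℂ] Matrix (Fin 2) (Fin 2) ℂ :=
  LinearMap.mulLeft ℂ (unipProd u 0 i) ∘ₗ LinearMap.mulRight ℂ (unipProd u (i + 1) n)

def sigma3At (u : ℕ → ℂ) (n i : ℕ) : Matrix (Fin 2) (Fin 2) ℂ :=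
  unipProd u 0 i * sigma3 * unipProd u i n

section Unipotent

variable (u : ℕ → ℂ)

lemma unipFactor_mul_sigma3_sub (i : ℕ) :
    unipFactor u i * sigma3 - sigma3 * unipFactor u i
      = ((-1) ^ (i + 1) * 2 * u i) • nilDir i := by
  rcases Nat.even_or_odd i with h | h <;>
  · ext a b
    fin_cases a <;> fin_cases b <;>
      simp [unipFactor, nilDir, sigma3, sigmaP, sigmaM, h, h.add_one.neg_one_pow,
        Nat.not_even_iff_odd.mpr, Matrix.one_fin_two]
    ring

lemma unipFactor_mul_sigma3_add (i : ℕ) :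
    unipFactor u i * sigma3 + sigma3 * unipFactor u i = (2 : ℂ) • sigma3 := by
  rcases Nat.even_or_odd i with h | h <;>
  · ext a b
    fin_cases a <;> fin_cases b <;>
      simp [unipFactor, nilDir, sigma3, sigmaP, sigmaM, h, Nat.not_even_iff_odd.mpr,
        Matrix.one_fin_two] <;> norm_num

/- `E := nilDir k = nilDir (k + 2)` squares to zero and commutes with the outer factors, so the
left side is `unipFactor u k * [unipFactor u (k + 1), E] * unipFactor u (k + 2)`, and
`[unipFactor u (k + 1), E] = u (k + 1) [nilDir (k + 1), E] = ±u (k + 1) σ3`. -/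
lemma unipFactor_triple_sub (k : ℕ) :
    unipFactor u k * unipFactor u (k + 1) * nilDir (k + 2)
        - nilDir k * unipFactor u (k + 1) * unipFactor u (k + 2)
      = ((-1) ^ (k + 1) * u (k + 1)) • (unipFactor u k * sigma3 * unipFactor u (k + 2)) := by
  have h2 : Even (k + 2) ↔ Even k := by simp [Nat.even_add]
  rcases Nat.even_or_odd k with h | h <;>
  · ext a b
    fin_cases a <;> fin_cases b <;>
      simp [unipFactor, nilDir, sigma3, sigmaP, sigmaM, h, h2, h.add_one.neg_one_pow,
        Nat.not_even_iff_odd.mpr, Matrix.one_fin_two]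
    ring

@[simp] lemma unipProd_self (j : ℕ) : unipProd u j j = 1 := by simp [unipProd]

lemma unipProd_succ_right {j n : ℕ} (h : j ≤ n) :
    unipProd u j (n + 1) = unipProd u j n * unipFactor u n := by
  rw [unipProd, show n + 1 - j = n - j + 1 by omega, List.range'_concat]
  simp [unipProd, Nat.add_sub_cancel' h]

lemma unipProd_eq_unipFactor_mul {j n : ℕ} (h : j < n) :
    unipProd u j n = unipFactor u j * unipProd u (j + 1) n := by
  rw [unipProd, show n - j = n - (j + 1) + 1 by omega, List.range'_succ]
  simp [unipProd]

lemma unipProd_mul_unipProd {i j n : ℕ} (hij : i ≤ j) (hjn : j ≤ n) :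
    unipProd u i j * unipProd u j n = unipProd u i n := by
  have h := List.range'_append (s := i) (m := j - i) (n := n - j) (step := 1)
  rw [one_mul, Nat.add_sub_cancel' hij, show j - i + (n - j) = n - i by omega] at h
  rw [unipProd, unipProd, unipProd, ← List.prod_append, ← List.map_append, h]

lemma unipProd_congr {v : ℕ → ℂ} {j n : ℕ} (h : ∀ i, j ≤ i → i < n → u i = v i) :
    unipProd u j n = unipProd v j n := by
  unfold unipProd
  congr 1
  refine List.map_congr_left fun i hi => ?_
  rw [List.mem_range'_1] at hi
  simp [unipFactor, h i hi.1 (by omega)]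

lemma unipProd_ofFn_pairs (n : ℕ) :
    (List.ofFn fun i : Fin n => unipFactor u (2 * i) * unipFactor u (2 * i + 1)).prod
      = unipProd u 0 (2 * n) := by
  induction n with
  | zero => simp
  | succ n ih =>
    rw [List.ofFn_succ', List.concat_eq_append, List.prod_append]
    simp only [Fin.val_castSucc, ih, Fin.val_last, List.prod_singleton]
    rw [show 2 * (n + 1) = 2 * n + 1 + 1 by ring, unipProd_succ_right u (by omega),
      unipProd_succ_right u (by omega), mul_assoc]

lemma insertAt_apply (n i : ℕ) (X : Matrix (Fin 2) (Fin 2) ℂ) :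
    insertAt u n i X = unipProd u 0 i * X * unipProd u (i + 1) n := by
  simp [insertAt, mul_assoc]

lemma insertAt_unipFactor {n i : ℕ} (h : i < n) :
    insertAt u n i (unipFactor u i) = unipProd u 0 n := by
  rw [insertAt_apply, ← unipProd_succ_right u (Nat.zero_le i),
    unipProd_mul_unipProd u (by omega) h]

lemma insertAt_congr {v : ℕ → ℂ} (n i : ℕ) (h : ∀ k, k ≠ i → u k = v k) :
    insertAt u n i = insertAt v n i := by
  ext1 X
  rw [insertAt_apply, insertAt_apply, unipProd_congr u fun k _ hk => h k (by omega),
    unipProd_congr u fun k hk _ => h k (by omega)]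

lemma sigma3At_succ (n i : ℕ) :
    sigma3At u n (i + 1) = insertAt u n i (unipFactor u i * sigma3) := by
  rw [sigma3At, insertAt_apply, unipProd_succ_right u (Nat.zero_le i),
    mul_assoc (unipProd u 0 i)]

lemma sigma3At_eq {n i : ℕ} (h : i < n) :
    sigma3At u n i = insertAt u n i (sigma3 * unipFactor u i) := by
  rw [sigma3At, insertAt_apply, unipProd_eq_unipFactor_mul u h]
  noncomm_ring

lemma sigma3At_succ_sub {n i : ℕ} (h : i < n) :
    sigma3At u n (i + 1) - sigma3At u n i
      = ((-1) ^ (i + 1) * 2 * u i) • insertAt u n i (nilDir i) := by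
  rw [sigma3At_succ, sigma3At_eq u h, ← map_sub, unipFactor_mul_sigma3_sub, map_smul]

lemma sigma3At_add_succ {n i : ℕ} (h : i < n) :
    sigma3At u n i + sigma3At u n (i + 1) = (2 : ℂ) • insertAt u n i sigma3 := by
  rw [sigma3At_succ, sigma3At_eq u h, ← map_add, add_comm, unipFactor_mul_sigma3_add, map_smul]

lemma insertAt_nilDir_succ_sub_pred {n m : ℕ} (hm : 1 ≤ m) (hmn : m + 1 < n) :
    insertAt u n (m + 1) (nilDir (m + 1)) - insertAt u n (m - 1) (nilDir (m - 1))
      = ((-1) ^ m * u m) • insertAt u n m sigma3 := by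
  obtain ⟨k, rfl⟩ : ∃ k, m = k + 1 := ⟨m - 1, by omega⟩
  have h := congrArg (fun X => unipProd u 0 k * X * unipProd u (k + 3) n)
    (unipFactor_triple_sub u k)
  simp only [Nat.add_sub_cancel, insertAt_apply]
  rw [unipProd_succ_right u (by omega), unipProd_succ_right u (by omega),
    unipProd_eq_unipFactor_mul u (show k + 1 < n by omega),
    unipProd_eq_unipFactor_mul u (show k + 2 < n by omega)]
  simp only [mul_sub, sub_mul, Matrix.mul_smul, Matrix.smul_mul] at h ⊢
  convert h using 2 <;> noncomm_ring

end Unipotent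

def natExtend {n : ℕ} (t : Fin n → ℂ) (i : ℕ) : ℂ := if h : i < n then t ⟨i, h⟩ else 0

lemma natExtend_coe {n : ℕ} (t : Fin n → ℂ) (i : Fin n) : natExtend t i = t i := by
  simp [natExtend]

lemma natExtend_update {n : ℕ} (t : Fin n → ℂ) (j : Fin n) (z : ℂ) (i : ℕ) :
    natExtend (Function.update t j z) i = if i = j then z else natExtend t i := by
  unfold natExtend
  split_ifs <;> simp_all [Fin.ext_iff]

lemma differentiable_natExtend {n : ℕ} (i : ℕ) :
    Differentiable ℂ fun t : Fin n → ℂ => natExtend t i := by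
  unfold natExtend
  split_ifs <;> fun_prop

lemma differentiable_unipProd_natExtend_apply {N : ℕ} (n : ℕ) (a b : Fin 2) :
    Differentiable ℂ fun t : Fin N → ℂ => unipProd (natExtend t) 0 n a b := by
  induction n generalizing a b with
  | zero => simp only [unipProd_self]; fun_prop
  | succ n ih =>
    have := differentiable_natExtend (n := N) n
    simp only [unipProd_succ_right _ (Nat.zero_le n), Matrix.mul_apply, Fin.sum_univ_two,
      unipFactor, Matrix.add_apply, Matrix.smul_apply, smul_eq_mul]
    fun_prop

lemma unipProd_natExtend_update {n : ℕ} (t : Fin n → ℂ) (j : Fin n) (z : ℂ) :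
    unipProd (natExtend (Function.update t j z)) 0 n
      = insertAt (natExtend t) n j (1 + z • nilDir j) := by
  rw [← insertAt_unipFactor _ j.isLt, unipFactor, natExtend_update, if_pos rfl]
  exact congrFun (congrArg DFunLike.coe (insertAt_congr _ _ _ fun k hk => by
    rw [natExtend_update, if_neg hk])) _

def lamDiag (lam : ℂ) : Matrix (Fin 2) (Fin 2) ℂ := !![lam, 0; 0, lam⁻¹]

lemma lamDiag_mul_sigma3 (lam : ℂ) : lamDiag lam * sigma3 = sigma3 * lamDiag lam := by
  ext a b
  fin_cases a <;> fin_cases b <;> simp [lamDiag, sigma3]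

lemma hasDerivAt_lamDiag_apply {lam : ℂ} (hlam : lam ≠ 0) (k b : Fin 2) :
    HasDerivAt (fun lm => lamDiag lm k b) (lam⁻¹ * (sigma3 * lamDiag lam) k b) lam := by
  fin_cases k <;> fin_cases b <;> simp [lamDiag, sigma3, hasDerivAt_const]
  · simpa [inv_mul_cancel₀ hlam] using hasDerivAt_id' lam
  · simpa [sq] using hasDerivAt_inv hlam

lemma unipFactor_of_even (u : ℕ → ℂ) {i : ℕ} (h : Even i) : unipFactor u i = Umat (u i) := by
  ext a b
  fin_cases a <;> fin_cases b <;> simp [unipFactor, nilDir, Umat, sigmaP, h, Matrix.one_fin_two]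

lemma unipFactor_of_odd (u : ℕ → ℂ) {i : ℕ} (h : Odd i) : unipFactor u i = Lmat (u i) := by
  ext a b
  fin_cases a <;> fin_cases b <;>
    simp [unipFactor, nilDir, Lmat, sigmaM, Nat.not_even_iff_odd.mpr h, Matrix.one_fin_two]

section Fmat

variable (K : ℕ) (s : Fin (2 * K + 2) → ℂ) (lam : ℂ)

lemma Fmat_eq : Fmat K s lam = unipProd (natExtend s) 0 (2 * K + 2) * lamDiag lam := by
  have h := unipProd_ofFn_pairs (natExtend s) (K + 1)
  rw [show 2 * (K + 1) = 2 * K + 2 by ring] at h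
  rw [Fmat, lamDiag, ← h]
  congr 3
  funext i
  rw [unipFactor_of_even _ (even_two_mul _), unipFactor_of_odd _ (odd_two_mul_add_one _)]
  simp only [natExtend, dif_pos (show 2 * (i : ℕ) + 1 < 2 * K + 2 by omega),
    dif_pos (show 2 * (i : ℕ) < 2 * K + 2 by omega)]

lemma Fmat_mul_sigma3_sub :
    Fmat K s lam * sigma3 - sigma3 * Fmat K s lam
      = (sigma3At (natExtend s) (2 * K + 2) (2 * K + 2) - sigma3At (natExtend s) (2 * K + 2) 0)
          * lamDiag lam := by
  simp only [Fmat_eq, sigma3At, unipProd_self, mul_one, one_mul, Matrix.sub_mul,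
    Matrix.mul_assoc, lamDiag_mul_sigma3]

lemma pS_Fmat (j : Fin (2 * K + 2)) (a b : Fin 2) :
    pS K j (fun t lm => Fmat K t lm a b) s lam
      = (insertAt (natExtend s) (2 * K + 2) j (nilDir j) * lamDiag lam) a b := by
  simp only [pS, Fmat_eq]
  apply fderiv_apply_single_of_hasDerivAt_update
  · simp only [Matrix.mul_apply, Fin.sum_univ_two]
    have := differentiable_unipProd_natExtend_apply (N := 2 * K + 2) (2 * K + 2)
    fun_prop
  · simp only [unipProd_natExtend_update, map_add, map_smul, Matrix.add_mul, Matrix.smul_mul,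
      Matrix.add_apply, Matrix.smul_apply, smul_eq_mul]
    exact (((hasDerivAt_id' (s j)).mul_const _).const_add _).congr_deriv (one_mul _)

lemma pL_Fmat (hlam : lam ≠ 0) (a b : Fin 2) :
    pL K (fun t lm => Fmat K t lm a b) s lam
      = lam⁻¹ * (sigma3At (natExtend s) (2 * K + 2) (2 * K + 2) * lamDiag lam) a b := by
  simp only [pL, Fmat_eq, sigma3At, unipProd_self, mul_one, Matrix.mul_assoc _ sigma3]
  refine HasDerivAt.deriv ?_
  simp only [Matrix.mul_apply (M := unipProd _ _ _), Finset.mul_sum]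
  refine HasDerivAt.fun_sum fun k _ => ?_
  exact ((hasDerivAt_lamDiag_apply hlam k b).const_mul _).congr_deriv (mul_left_comm _ _ _)

end Fmat

section Bracket

variable (K : ℕ) (s : Fin (2 * K + 2) → ℂ) (lam : ℂ) (m : Fin (2 * K + 2))

lemma pS_coord (j : Fin (2 * K + 2)) :
    pS K j (fun t _ => t m) s lam = if m = j then 1 else 0 := by
  rw [pS, (hasFDerivAt_apply m s).fderiv, ContinuousLinearMap.proj_apply, Pi.single_apply]

lemma pL_coord : pL K (fun t _ => t m) s lam = 0 := deriv_const lam (s m)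

lemma fnBr_coord_left (g : (Fin (2 * K + 2) → ℂ) → ℂ → ℂ) :
    fnBr K (fun t _ => t m) g s lam
      = ∑ l : Fin (2 * K + 2), (if (m : ℕ) < l then cSS K m l s lam * pS K l g s lam else 0)
        - ∑ j : Fin (2 * K + 2), (if (j : ℕ) < m then cSS K j m s lam * pS K j g s lam else 0)
        + cSL K m s lam * pL K g s lam := by
  have h (j l : Fin (2 * K + 2)) (A B : ℂ) :
      (if (j : ℕ) < l then
          cSS K j l s lam * ((if m = j then 1 else 0) * A - (if m = l then 1 else 0) * B)
        else 0)
      = (if m = j then (if (j : ℕ) < l then cSS K j l s lam * A else 0) else 0)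
        - (if m = l then (if (j : ℕ) < l then cSS K j l s lam * B else 0) else 0) := by
    split_ifs <;> ring
  simp only [fnBr, pS_coord, pL_coord, h]
  simp only [Finset.sum_sub_distrib, ite_mul, one_mul, zero_mul, mul_ite, mul_zero, sub_zero,
    Finset.sum_ite_eq, Finset.mem_univ, if_true]
  rw [Finset.sum_comm (f := fun j l => if m = j then _ else 0)]
  simp only [Finset.sum_ite_eq, Finset.mem_univ, if_true]

lemma sum_cSS_gt (hm : (m : ℕ) ≠ 0) (hmN : (m : ℕ) + 1 < 2 * K + 2) (g : ℕ → ℂ) :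
    ∑ l : Fin (2 * K + 2), (if (m : ℕ) < l then cSS K m l s lam * g l else 0)
      = g (m + 1) + (-1) ^ (m : ℕ) * s m
          * ∑ i ∈ Finset.Ico ((m : ℕ) + 1) (2 * K + 2), (-1) ^ (i + 1) * natExtend s i * g i := by
  have hterm (l : Fin (2 * K + 2)) : (if (m : ℕ) < l then cSS K m l s lam * g l else 0)
      = (if (m : ℕ) + 1 = l then g l else 0) + (-1) ^ (m : ℕ) * s m
          * (if (m : ℕ) < l then (-1) ^ ((l : ℕ) + 1) * natExtend s l * g l else 0) := by
    simp only [cSS, natExtend_coe, hm, false_and, if_false, sub_zero]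
    split_ifs <;> first | omega | ring
  rw [Finset.sum_congr rfl fun l _ => hterm l, Finset.sum_add_distrib, ← Finset.mul_sum,
    Fin.sum_univ_eq_sum_range (fun i => if (m : ℕ) + 1 = i then g i else 0),
    Fin.sum_univ_eq_sum_range
      (fun i => if (m : ℕ) < i then (-1) ^ (i + 1) * natExtend s i * g i else 0),
    Finset.sum_ite_eq, if_pos (Finset.mem_range.mpr hmN), ← Finset.sum_filter]
  congr 3
  ext i
  simp only [Finset.mem_filter, Finset.mem_range, Finset.mem_Ico]
  omega

lemma sum_cSS_lt (hm : 0 < (m : ℕ)) (hmN : (m : ℕ) ≠ 2 * K + 1) (g : ℕ → ℂ) :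
    ∑ j : Fin (2 * K + 2), (if (j : ℕ) < m then cSS K j m s lam * g j else 0)
      = g (m - 1) + (-1) ^ (m : ℕ) * s m
          * ∑ i ∈ Finset.Ico 0 (m : ℕ), (-1) ^ (i + 1) * natExtend s i * g i := by
  have hterm (j : Fin (2 * K + 2)) : (if (j : ℕ) < m then cSS K j m s lam * g j else 0)
      = (if (m : ℕ) - 1 = j then g j else 0) + (-1) ^ (m : ℕ) * s m
          * (if (j : ℕ) < m then (-1) ^ ((j : ℕ) + 1) * natExtend s j * g j else 0) := by
    simp only [cSS, natExtend_coe, hmN, and_false, if_false, sub_zero]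
    split_ifs <;> first | omega | ring
  rw [Finset.sum_congr rfl fun j _ => hterm j, Finset.sum_add_distrib, ← Finset.mul_sum,
    Fin.sum_univ_eq_sum_range (fun i => if (m : ℕ) - 1 = i then g i else 0),
    Fin.sum_univ_eq_sum_range
      (fun i => if i < (m : ℕ) then (-1) ^ (i + 1) * natExtend s i * g i else 0),
    Finset.sum_ite_eq, if_pos (Finset.mem_range.mpr (by omega)), ← Finset.sum_filter]
  congr 3
  ext i
  simp only [Finset.mem_filter, Finset.mem_range, Finset.mem_Ico]
  omega

end Bracket

/-- for `2 ≤ ℓ ≤ 2K+1`, `{s_ℓ, F}_{FN} = (−1)^ℓ (s_ℓ/2)[F, σ3]`, entrywise,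
identically on `ℂ^{2K+2} × ℂ*` (here `ℓ` is the paper's 1-based index, so `s_ℓ` is the
coordinate with 0-based index `ℓ−1`). -/
theorem fn_bracket_sMiddle_F (K : ℕ) (l : ℕ) (hl2 : 2 ≤ l) (hl : l ≤ 2*K+1)
    (s : Fin (2*K+2) → ℂ) (lam : ℂ) (hlam : lam ≠ 0) (a b : Fin 2) :
    fnBr K (fun t _ => t ⟨l-1, by omega⟩) (fun t lm => Fmat K t lm a b) s lam
      = (((-1:ℂ)^l * s ⟨l-1, by omega⟩ / 2) •
          (Fmat K s lam * sigma3 - sigma3 * Fmat K s lam)) a b := by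
  set m : Fin (2 * K + 2) := ⟨l - 1, by omega⟩
  have hlm : l = (m : ℕ) + 1 := by simp only [m]; omega
  set u := natExtend s
  let entry (X : Matrix (Fin 2) (Fin 2) ℂ) : ℂ := (X * lamDiag lam) a b
  let w (i : ℕ) : ℂ := entry (insertAt u (2 * K + 2) i (nilDir i))
  let ψ (i : ℕ) : ℂ := entry (sigma3At u (2 * K + 2) i)
  let φ : ℂ := entry (insertAt u (2 * K + 2) m sigma3)
  have hψ (i : ℕ) (hi : i < 2 * K + 2) : ψ (i + 1) - ψ i = (-1) ^ (i + 1) * 2 * u i * w i := by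
    simpa [entry, Matrix.sub_mul, mul_assoc] using congrArg entry (sigma3At_succ_sub u hi)
  have hψφ : ψ m + ψ (m + 1) = 2 * φ := by
    simpa [entry, Matrix.add_mul] using congrArg entry (sigma3At_add_succ u m.isLt)
  have hwφ : w (m + 1) - w (m - 1) = (-1) ^ (m : ℕ) * s m * φ := by
    simpa [entry, Matrix.sub_mul, mul_assoc, u, natExtend_coe] using congrArg entry
      (insertAt_nilDir_succ_sub_pred u (n := 2 * K + 2) (m := m) (by omega) (by omega))
  have hpS (j : Fin (2 * K + 2)) : pS K j (fun t lm => Fmat K t lm a b) s lam = w j :=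
    pS_Fmat K s lam j a b
  have hF : ((sigma3At u (2 * K + 2) (2 * K + 2) - sigma3At u (2 * K + 2) 0) * lamDiag lam) a b
      = ψ (2 * K + 2) - ψ 0 := by
    simp [ψ, entry, Matrix.sub_mul]
  rw [fnBr_coord_left]
  simp only [hpS]
  rw [sum_cSS_gt K s lam m (by omega) (by omega) w, sum_cSS_lt K s lam m (by omega) (by omega) w,
    sum_Ico_eq_half_sub (by omega) fun i hi => hψ i (Finset.mem_Ico.mp hi).2,
    sum_Ico_eq_half_sub (by omega) fun i hi => hψ i (by simp at hi; omega),
    pL_Fmat K s lam hlam, cSL, Fmat_mul_sigma3_sub, Matrix.smul_apply, hF, hlm]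
  linear_combination hwφ - ((-1) ^ (m : ℕ) * s m / 2) * hψφ
    + (-(-1) ^ (m : ℕ) * s m * ψ (2 * K + 2)) * mul_inv_cancel₀ hlam
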